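/- arXiv:2505.05349 — 2 statements merged into one kernel-verified Lean document; each statement's English description precedes it below -/
import Mathlib

section
/- Let S be a (not necessarily commutative) ring and d : S → S an additive map satisfying the Leibniz rule d(a·b) = d(a)·b + a·d(b) for all a, b ∈ S. Let u, η ∈ Sˣ be units and A ∈ S. If the dressing field u transforms under η as u ↦ η⁻¹·u·η, then the dressed potential transforms as a standard gauge field, i.e. dressing the η-transformed potential with the η-transformed dressing field reproduces the η-gauge transform of the dressed potential: (η⁻¹uη)⁻¹·(η⁻¹·A·η + η⁻¹·d(η))·(η⁻¹uη) + (η⁻¹uη)⁻¹·d(η⁻¹·u·η) = η⁻¹·(u⁻¹·A·u + u⁻¹·d(u))·η + η⁻¹·d(η). -/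
/-- Gauge-potential part of Proposition 1 (residual transformations of the first kind)
of the Dressing Field Method: if the dressing field `u` transforms under `η` as
`u ↦ η⁻¹ * u * η`, then dressing the `η`-transformed potential with the
`η`-transformed dressing field reproduces the `η`-gauge transform of the dressed
potential. -/
theorem dressed_potential_residual_first_kind
    {S : Type*} [Ring S] (d : S →+ S)
    (hLeib : ∀ a b : S, d (a * b) = d a * b + a * d b)
    (u η : Sˣ) (A : S) :
    (((η⁻¹ * u * η)⁻¹ : Sˣ) : S) *
        (((η⁻¹ : Sˣ) : S) * A * ((η : Sˣ) : S) + ((η⁻¹ : Sˣ) : S) * d ((η : Sˣ) : S)) *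
        (((η⁻¹ * u * η) : Sˣ) : S)
      + (((η⁻¹ * u * η)⁻¹ : Sˣ) : S) * d (((η⁻¹ : Sˣ) : S) * ((u : Sˣ) : S) * ((η : Sˣ) : S))
    = ((η⁻¹ : Sˣ) : S) *
        (((u⁻¹ : Sˣ) : S) * A * ((u : Sˣ) : S) + ((u⁻¹ : Sˣ) : S) * d ((u : Sˣ) : S)) *
        ((η : Sˣ) : S)
      + ((η⁻¹ : Sˣ) : S) * d ((η : Sˣ) : S) := by
  have hd1 : d 1 = 0 := by
    have := hLeib 1 1
    simpa using this
  have hde : d ((η⁻¹ : Sˣ) : S) =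
      -(((η⁻¹ : Sˣ) : S) * d ((η : Sˣ) : S) * ((η⁻¹ : Sˣ) : S)) := by
    have h0 : d (((η⁻¹ : Sˣ) : S) * ((η : Sˣ) : S)) = 0 := by
      simp [hd1]
    rw [hLeib] at h0
    have := congrArg (· * ((η⁻¹ : Sˣ) : S)) h0
    simp only [add_mul, zero_mul, mul_assoc, Units.mul_inv_cancel_right] at this
    rw [η.mul_inv, mul_one] at this
    rw [eq_neg_of_add_eq_zero_left this, mul_assoc]
  simp only [mul_inv_rev, inv_inv, Units.val_mul, hLeib, hde]
  have e1 : ((η : Sˣ) : S) * ((η⁻¹ : Sˣ) : S) = 1 := η.mul_inv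
  have e2 : ((η⁻¹ : Sˣ) : S) * ((η : Sˣ) : S) = 1 := η.inv_mul
  have e3 : ((u : Sˣ) : S) * ((u⁻¹ : Sˣ) : S) = 1 := u.mul_inv
  have e4 : ((u⁻¹ : Sˣ) : S) * ((u : Sˣ) : S) = 1 := u.inv_mul
  generalize ((η : Sˣ) : S) = h at *
  generalize ((η⁻¹ : Sˣ) : S) = e at *
  generalize ((u : Sˣ) : S) = v at *
  generalize ((u⁻¹ : Sˣ) : S) = w at *
  have k1 : ∀ x : S, h * (e * x) = x := fun x => by rw [← mul_assoc, e1, one_mul]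
  have k2 : ∀ x : S, e * (h * x) = x := fun x => by rw [← mul_assoc, e2, one_mul]
  have k3 : ∀ x : S, v * (w * x) = x := fun x => by rw [← mul_assoc, e3, one_mul]
  have k4 : ∀ x : S, w * (v * x) = x := fun x => by rw [← mul_assoc, e4, one_mul]
  simp only [mul_add, add_mul, neg_mul, mul_neg, mul_assoc, k1, k2, k3, k4, e1, e2, e3, e4,
    mul_one]
  abel
end

section
/- Let S be a (not necessarily commutative) ring, n ∈ ℕ, A, F n×n matrices over S, V, T, t n×1 columns over S, and d : S → S an additive map with d(1) = 0, applied to matrices entrywise. Set 𝕋 := Matrix.fromBlocks 1 t 0 1 and 𝕋⁻¹ := Matrix.fromBlocks 1 (−t) 0 1, Ā := Matrix.fromBlocks A V 0 0, F̄ := Matrix.fromBlocks F T 0 0. Then, under internal gauge translations: 𝕋⁻¹·Ā·𝕋 + 𝕋⁻¹·(𝕋.map d) = Matrix.fromBlocks A (V + t.map d + A·t) 0 0, and 𝕋⁻¹·F̄·𝕋 = Matrix.fromBlocks F (T + F·t) 0 0. -/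
open Matrix

lemma map_one_eq_zero' {S : Type*} [Ring S] {m : Type*} [DecidableEq m] [Fintype m]
    (d : S →+ S) (hd1 : d 1 = 0) :
    (1 : Matrix m m S).map d = 0 := by
  ext i j
  simp [Matrix.map_apply, Matrix.one_apply]
  split <;> simp [hd1]

/-- Transformation of the MAG potential and field strength under internal gauge
translations: `Ā^𝕋 = [[A, V + Dt],[0,0]]` with `Dt = dt + A·t`, and
`F̄^𝕋 = [[F, T + F·t],[0,0]]`. -/
theorem MAG_fields_gauge_translations
    {S : Type*} [Ring S] (n : ℕ) (d : S →+ S) (hd1 : d 1 = 0)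
    (A F : Matrix (Fin n) (Fin n) S)
    (V T t : Matrix (Fin n) (Fin 1) S) :
    (Matrix.fromBlocks (1 : Matrix (Fin n) (Fin n) S) (-t) (0 : Matrix (Fin 1) (Fin n) S)
        (1 : Matrix (Fin 1) (Fin 1) S) *
      Matrix.fromBlocks A V (0 : Matrix (Fin 1) (Fin n) S) (0 : Matrix (Fin 1) (Fin 1) S) *
      Matrix.fromBlocks (1 : Matrix (Fin n) (Fin n) S) t (0 : Matrix (Fin 1) (Fin n) S)
        (1 : Matrix (Fin 1) (Fin 1) S)
    + Matrix.fromBlocks (1 : Matrix (Fin n) (Fin n) S) (-t) (0 : Matrix (Fin 1) (Fin n) S)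
        (1 : Matrix (Fin 1) (Fin 1) S) *
      (Matrix.fromBlocks (1 : Matrix (Fin n) (Fin n) S) t (0 : Matrix (Fin 1) (Fin n) S)
        (1 : Matrix (Fin 1) (Fin 1) S)).map d
    = Matrix.fromBlocks A (V + t.map d + A * t)
        (0 : Matrix (Fin 1) (Fin n) S) (0 : Matrix (Fin 1) (Fin 1) S))
    ∧
    (Matrix.fromBlocks (1 : Matrix (Fin n) (Fin n) S) (-t) (0 : Matrix (Fin 1) (Fin n) S)
        (1 : Matrix (Fin 1) (Fin 1) S) *
      Matrix.fromBlocks F T (0 : Matrix (Fin 1) (Fin n) S) (0 : Matrix (Fin 1) (Fin 1) S) *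
      Matrix.fromBlocks (1 : Matrix (Fin n) (Fin n) S) t (0 : Matrix (Fin 1) (Fin n) S)
        (1 : Matrix (Fin 1) (Fin 1) S)
    = Matrix.fromBlocks F (T + F * t)
        (0 : Matrix (Fin 1) (Fin n) S) (0 : Matrix (Fin 1) (Fin 1) S)) := by
  have hmap : (Matrix.fromBlocks (1 : Matrix (Fin n) (Fin n) S) t
      (0 : Matrix (Fin 1) (Fin n) S) (1 : Matrix (Fin 1) (Fin 1) S)).map d
      = Matrix.fromBlocks 0 (t.map d) 0 0 := by
    rw [Matrix.fromBlocks_map, map_one_eq_zero' d hd1, map_one_eq_zero' d hd1,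
      Matrix.map_zero _ d.map_zero]
  constructor
  · rw [hmap]
    simp [Matrix.fromBlocks_multiply, Matrix.fromBlocks_add]
    abel
  · simp [Matrix.fromBlocks_multiply]
    abel
end
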